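/- Let T ∈ ℝ^{n×n} be a tridiagonal matrix with zero diagonal, subdiagonal entries aᵢ = (i−1)/(2i−1)·α (for i = 2,…,n) and superdiagonal entries cᵢ = (i+2)/(2i+3)·α (for i = 1,…,n−1), where α ≠ 0. Then all eigenvalues of T are real and of the form b·α for real numbers b, and they are pairwise distinct. -/

import Mathlib

/-!
Put `w k = (2k+3)/((k+1)(k+2))`, chosen so that `w (k+1) / w k` is the ratio of the
subdiagonal to the superdiagonal entry at `(k, k+1)`. Then `A₂ · diag w` is symmetric, so
`S = diag(√w)⁻¹ · A₂ · diag(√w)` is a real symmetric matrix with the characteristic polynomial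
of `A₂`: its eigenvalues `λ` are real, and `λ = (λ / α) · α`. Since `S` is tridiagonal with
nonzero superdiagonal, the rows of `S x = λ x` determine an eigenvector recursively from its
first coordinate. Two orthonormal eigenvectors for one eigenvalue would combine into a nonzero
eigenvector with vanishing first coordinate, so the eigenvalues are simple.
-/

open Matrix
open scoped InnerProductSpace

/-- The tridiagonal matrix `A₂` of the HSWME: zero diagonal, subdiagonal entries
`aᵢ = (i−1)/(2i−1)·α` (rows `i = 2,…,n`, 1-indexed) and superdiagonal entries
`cᵢ = (i+2)/(2i+3)·α` (rows `i = 1,…,n−1`, 1-indexed). -/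
noncomputable def A2mat (n : ℕ) (α : ℝ) : Matrix (Fin n) (Fin n) ℝ :=
  Matrix.of fun i j =>
    if (j : ℕ) = (i : ℕ) + 1 then (((i : ℕ) : ℝ) + 3) / (2 * ((i : ℕ) : ℝ) + 5) * α
    else if (i : ℕ) = (j : ℕ) + 1 then (((j : ℕ) : ℝ) + 1) / (2 * ((j : ℕ) : ℝ) + 3) * α
    else 0

namespace Matrix

def IsUnreducedLowerHessenberg {R : Type*} [Zero R] {n : ℕ} (M : Matrix (Fin n) (Fin n) R) :
    Prop :=
  (∀ i j : Fin n, (i : ℕ) + 1 < j → M i j = 0) ∧ ∀ i j : Fin n, (j : ℕ) = i + 1 → M i j ≠ 0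

namespace IsUnreducedLowerHessenberg

variable {R S : Type*} {n : ℕ} {M : Matrix (Fin n) (Fin n) R}

theorem map [Zero R] [Zero S] (hM : M.IsUnreducedLowerHessenberg) {f : R → S}
    (hf : ∀ r, f r = 0 ↔ r = 0) : (M.map f).IsUnreducedLowerHessenberg :=
  ⟨fun i j hij => (hf _).2 (hM.1 i j hij), fun i j hij => (hf _).not.2 (hM.2 i j hij)⟩

/-- Row `k` of `M x = μ x` determines `x (k + 1)` from `x 0, …, x k`. -/
theorem eq_zero_of_mulVec_eq_smul [Semiring R] [NoZeroDivisors R]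
    (hM : M.IsUnreducedLowerHessenberg) {μ : R} {x : Fin n → R} (hx : M *ᵥ x = μ • x)
    (hn : 0 < n) (hx₀ : x ⟨0, hn⟩ = 0) : x = 0 := by
  suffices h : ∀ k, ∀ j : Fin n, (j : ℕ) ≤ k → x j = 0 from funext fun j => h j j le_rfl
  intro k
  induction k with
  | zero => intro j hj; rwa [show j = ⟨0, hn⟩ from Fin.ext (Nat.le_zero.1 hj)]
  | succ k ih =>
    intro j hj
    rcases Nat.lt_or_eq_of_le hj with hlt | hjk
    · exact ih j (Nat.lt_succ_iff.1 hlt)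
    set i : Fin n := ⟨k, by omega⟩
    have hrow : M i j * x j = μ * x i := by
      rw [← smul_eq_mul μ, ← Pi.smul_apply, ← hx, mulVec, dotProduct]
      refine (Finset.sum_eq_single (f := fun l => M i l * x l) j (fun l _ hl => ?_)
        (absurd (Finset.mem_univ j))).symm
      have hl : (l : ℕ) ≠ j := fun h => hl (Fin.ext h)
      rcases le_or_gt (l : ℕ) k with hlk | hkl
      · rw [ih l hlk, mul_zero]
      · rw [hM.1 i l (by simp only [i]; omega), zero_mul]
    rw [ih i le_rfl, mul_zero] at hrow
    exact (mul_eq_zero.1 hrow).resolve_left (hM.2 i j hjk)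

end IsUnreducedLowerHessenberg

theorem IsHermitian.eigenvalues_injective_of_eigenvector_apply_ne_zero
    {𝕜 n : Type*} [RCLike 𝕜] [Fintype n] [DecidableEq n] {A : Matrix n n 𝕜}
    (hA : A.IsHermitian) (i₀ : n)
    (h : ∀ (μ : 𝕜) (x : n → 𝕜), A *ᵥ x = μ • x → x i₀ = 0 → x = 0) :
    Function.Injective hA.eigenvalues := by
  intro i j hij
  by_contra hne
  set b := hA.eigenvectorBasis
  set μ : 𝕜 := (hA.eigenvalues i : 𝕜)
  have heig : ∀ k, hA.eigenvalues k = hA.eigenvalues i → A *ᵥ ⇑(b k) = μ • ⇑(b k) := by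
    intro k hk
    rw [hA.mulVec_eigenvectorBasis, hk, RCLike.real_smul_eq_coe_smul (K := 𝕜)]
  have hbj : b j i₀ ≠ 0 := fun h0 =>
    b.orthonormal.ne_zero j (WithLp.ofLp_injective _ (h μ _ (heig j hij.symm) h0))
  -- `w` is an eigenvector vanishing at `i₀`, hence zero, yet its `b i`-coordinate is `b j i₀`.
  set w := b j i₀ • b i - b i i₀ • b j
  have hw : ⇑w = 0 := by
    refine h μ _ ?_ (by simp [w, mul_comm])
    simp only [w, WithLp.ofLp_sub, WithLp.ofLp_smul, mulVec_sub, mulVec_smul, heig i rfl,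
      heig j hij.symm, smul_sub, smul_comm μ]
  have hinner : ⟪b i, w⟫_𝕜 = b j i₀ := by
    simp [w, inner_sub_right, inner_smul_right, b.orthonormal.2 hne]
  rw [(WithLp.ofLp_eq_zero _).1 hw, inner_zero_right] at hinner
  exact hbj hinner.symm

section DiagonalSqrtConj

variable {ι : Type*} [Fintype ι] [DecidableEq ι] {A : Matrix ι ι ℝ} {w : ι → ℝ}

noncomputable def diagonalSqrtConj (A : Matrix ι ι ℝ) (w : ι → ℝ) : Matrix ι ι ℝ :=
  diagonal (fun i => (√(w i))⁻¹) * A * diagonal (fun i => √(w i))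

theorem diagonalSqrtConj_apply (i j : ι) :
    A.diagonalSqrtConj w i j = (√(w i))⁻¹ * A i j * √(w j) := by
  simp [diagonalSqrtConj, diagonal_mul, mul_diagonal]

theorem charpoly_diagonalSqrtConj (hw : ∀ i, 0 < w i) :
    (A.diagonalSqrtConj w).charpoly = A.charpoly := by
  rw [diagonalSqrtConj, charpoly_mul_comm, ← mul_assoc, diagonal_mul_diagonal]
  simp [fun i => (Real.sqrt_pos.2 (hw i)).ne']

theorem isSymm_diagonalSqrtConj (hw : ∀ i, 0 < w i) (hA : (A * diagonal w).IsSymm) :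
    (A.diagonalSqrtConj w).IsSymm := by
  refine IsSymm.ext fun i j => ?_
  have h := hA.apply i j
  simp only [mul_diagonal] at h
  rw [← Real.sq_sqrt (hw i).le, ← Real.sq_sqrt (hw j).le] at h
  have hi := (Real.sqrt_pos.2 (hw i)).ne'
  have hj := (Real.sqrt_pos.2 (hw j)).ne'
  rw [diagonalSqrtConj_apply, diagonalSqrtConj_apply]
  field_simp
  linear_combination h

theorem IsUnreducedLowerHessenberg.diagonalSqrtConj {n : ℕ} {A : Matrix (Fin n) (Fin n) ℝ}
    {w : Fin n → ℝ} (hA : A.IsUnreducedLowerHessenberg) (hw : ∀ i, 0 < w i) :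
    (A.diagonalSqrtConj w).IsUnreducedLowerHessenberg := by
  have hs := fun i => (Real.sqrt_pos.2 (hw i)).ne'
  refine ⟨fun i j hij => ?_, fun i j hij => ?_⟩
  · rw [diagonalSqrtConj_apply, hA.1 i j hij, mul_zero, zero_mul]
  · rw [diagonalSqrtConj_apply]
    exact mul_ne_zero (mul_ne_zero (inv_ne_zero (hs i)) (hA.2 i j hij)) (hs j)

end DiagonalSqrtConj

end Matrix

noncomputable def A2weight (k : ℕ) : ℝ := (2 * k + 3) / ((k + 1) * (k + 2))

theorem isSymm_A2mat_mul_diagonal_A2weight (n : ℕ) (α : ℝ) :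
    (A2mat n α * diagonal fun i : Fin n => A2weight i).IsSymm := by
  refine IsSymm.ext fun i j => ?_
  simp only [mul_diagonal, A2mat, of_apply, A2weight]
  split_ifs <;> try omega
  · rw [show ((i : ℕ) : ℝ) = j + 1 by exact_mod_cast ‹(i : ℕ) = j + 1›]
    field_simp
    ring
  · rw [show ((j : ℕ) : ℝ) = i + 1 by exact_mod_cast ‹(j : ℕ) = i + 1›]
    field_simp
    ring
  · simp

theorem isUnreducedLowerHessenberg_A2mat (n : ℕ) {α : ℝ} (hα : α ≠ 0) :
    (A2mat n α).IsUnreducedLowerHessenberg := by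
  refine ⟨fun i j hij => ?_, fun i j hij => ?_⟩
  · simp [A2mat, show (j : ℕ) ≠ i + 1 by omega, show (i : ℕ) ≠ j + 1 by omega]
  · simp only [A2mat, of_apply, if_pos hij]
    positivity

/-- For `α ≠ 0`, all eigenvalues of `A₂` are real, of the form `b·α`, and pairwise
distinct. -/
theorem A2_eigenvalues_real_distinct (n : ℕ) (α : ℝ) (hα : α ≠ 0) :
    ((A2mat n α).map (fun x : ℝ => (x : ℂ))).charpoly.roots.Nodup ∧
      ∀ μ ∈ ((A2mat n α).map (fun x : ℝ => (x : ℂ))).charpoly.roots,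
        ∃ b : ℝ, μ = ((b * α : ℝ) : ℂ) := by
  set S := (A2mat n α).diagonalSqrtConj fun i => A2weight i
  have hw : ∀ i : Fin n, 0 < A2weight i := fun i => by unfold A2weight; positivity
  have hS : (S.map (fun x : ℝ => (x : ℂ))).IsHermitian :=
    (isHermitian_iff_isSymm.2 (isSymm_diagonalSqrtConj hw
      (isSymm_A2mat_mul_diagonal_A2weight n α))).map _ fun x => (Complex.conj_ofReal x).symm
  have hchar : ((A2mat n α).map (fun x : ℝ => (x : ℂ))).charpoly =
      (S.map (fun x : ℝ => (x : ℂ))).charpoly := by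
    refine (charpoly_map _ Complex.ofRealHom).trans ?_
    rw [← charpoly_diagonalSqrtConj (A := A2mat n α) hw]
    exact (charpoly_map S Complex.ofRealHom).symm
  have hinj : Function.Injective hS.eigenvalues := fun i _ hij =>
    hS.eigenvalues_injective_of_eigenvector_apply_ne_zero ⟨0, i.pos⟩ (fun _ _ hx =>
      (((isUnreducedLowerHessenberg_A2mat n hα).diagonalSqrtConj hw).map
        (fun _ => Complex.ofReal_eq_zero)).eq_zero_of_mulVec_eq_smul hx i.pos) hij
  rw [hchar, hS.roots_charpoly_eq_eigenvalues]
  refine ⟨Finset.univ.nodup.map (RCLike.ofReal_injective.comp hinj), fun μ hμ => ?_⟩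
  obtain ⟨i, -, rfl⟩ := Multiset.mem_map.1 hμ
  exact ⟨hS.eigenvalues i / α, by rw [div_mul_cancel₀ _ hα]; rfl⟩
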